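/- For 0 ≤ d ≤ n, the ring R_{n,d} = ℤ[x_1,…,x_{n−d}]/(s_{d+1},…,s_n) is a free ℤ-module of rank (n choose d). -/

import Mathlib

/-!
Induction on `n - d`, comparing two presentations of one ring (the cohomology of the partial flag
variety `Fl(d, d+1; n)`). Let `n = d + m + 1`, write `x(t) = 1 + x₁ t + ⋯ + x_{m+1} t^(m+1)` and
`s(t) = x(t)⁻¹`. Over `R_{n,d}` adjoin a root `u` of `T^(m+1) x(-1/T)`, and over `R_{n,d+1}`,
with generators `y_j`, adjoin a root `v` of the degree `d + 1` truncation of `T^(d+1) s(-1/T)`.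
These two rings are isomorphic via `x(t) ↦ (1 + v t) y(t)`, `u ↦ v` and
`y(t) ↦ x(t) / (1 + u t)`, `v ↦ u`: the equation of `u` kills the coefficient of `t^(m+1)` in
`x(t) / (1 + u t)`, so that it is a polynomial of degree `≤ m`; the equation of `v` kills the
coefficient of `t^(d+1)` in `s(t) / (1 + v t)`; and the remaining relations propagate through the
recursion for division by `1 + u t`. The two extensions are free of ranks `m + 1` and `d + 1`, so
`R_{n,d}` is a `ℤ`-submodule of a free `ℤ`-module of rank `(n choose d+1) (d + 1)`, hence free of
rank `(n choose d+1) (d + 1) / (m + 1) = (n choose d)`.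
-/

open MvPolynomial

/-- The power series `1 + x₁ t + x₂ t² + ⋯ + x_m t^m` in `ℤ[x₁,…,x_m][[t]]`,
where `x_{i+1}` is the variable `X i` for `i : Fin m`. -/
noncomputable def genSeries (m : ℕ) : PowerSeries (MvPolynomial (Fin m) ℤ) :=
  1 + ∑ i : Fin m,
    PowerSeries.monomial ((i : ℕ) + 1) (X i)

/-- The polynomials `s_k ∈ ℤ[x₁,…,x_m]` defined by
`(1 + x₁ t + ⋯ + x_m t^m)⁻¹ = 1 + ∑_{k ≥ 1} s_k t^k`. -/
noncomputable def sPoly (m : ℕ) (k : ℕ) : MvPolynomial (Fin m) ℤ :=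
  PowerSeries.coeff k (PowerSeries.invOfUnit (genSeries m) 1)

/-- The quotient ring `ℤ[x₁,…,x_m]/(s_a,…,s_b)`.  Thus `R_{n,d} = RK (n-d) (d+1) n`,
`R_{n+1,d+1} = RK (n-d) (d+2) (n+1)` and `R_{n,d+1} = RK (n-d-1) (d+2) n`. -/
abbrev RK (m a b : ℕ) : Type :=
  MvPolynomial (Fin m) ℤ ⧸ Ideal.span (sPoly m '' Set.Icc a b)

/-- The quotient map `ℤ[x₁,…,x_m] → ℤ[x₁,…,x_m]/(s_a,…,s_b)`. -/
noncomputable def qk (m a b : ℕ) : MvPolynomial (Fin m) ℤ →+* RK m a b :=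
  Ideal.Quotient.mk _

/-- `xv m t` is the variable `x_t` of `ℤ[x₁,…,x_m]`, with the conventions
`x₀ = 1` and `x_t = 0` for `t < 0` or `t > m`. -/
noncomputable def xv (m : ℕ) (t : ℤ) : MvPolynomial (Fin m) ℤ :=
  if t = 0 then 1
  else if h : 1 ≤ t ∧ t ≤ (m : ℤ) then X (⟨t.toNat - 1, by omega⟩ : Fin m) else 0

/-- The Schur polynomial `Δ_a ∈ ℤ[x₁,…,x_m]` attached to a tuple
`a = (a₁,…,a_d)`: the `d × d` determinant whose `(i,j)` entry is
`x_{a_i + j - i}`, with the conventions `x₀ = 1` and `x_t = 0` for `t < 0`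
or `t > m`. -/
noncomputable def schur (m : ℕ) {d : ℕ} (a : Fin d → ℕ) : MvPolynomial (Fin m) ℤ :=
  Matrix.det (Matrix.of fun i j : Fin d => xv m ((a i : ℤ) + (j : ℤ) - (i : ℤ)))

namespace PowerSeries

variable {A B : Type*} [CommRing A] [CommRing B]

theorem map_mk (φ : A →+* B) (f : ℕ → A) : map φ (mk f) = mk (φ ∘ f) := by
  ext
  simp

theorem map_map {C : Type*} [CommRing C] (φ : A →+* B) (ψ : B →+* C) (f : A⟦X⟧) :
    map ψ (map φ f) = map (ψ.comp φ) f := by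
  rw [map_comp]
  rfl

theorem constantCoeff_map (φ : A →+* B) (f : A⟦X⟧) :
    constantCoeff (map φ f) = φ (constantCoeff f) := by
  rw [← coeff_zero_eq_constantCoeff_apply, coeff_map, coeff_zero_eq_constantCoeff_apply]

theorem one_add_C_mul_X_mul_mk_neg_pow (a : A) :
    (1 + C a * X) * mk (fun j => (-a) ^ j) = 1 := by
  simpa [rescale_mk, mul_comm] using congr(rescale (-a) $(mk_one_mul_one_sub_eq_one A))

theorem coeff_succ_one_add_C_mul_X_mul (a : A) (f : A⟦X⟧) (k : ℕ) :
    coeff (k + 1) ((1 + C a * X) * f) = coeff (k + 1) f + a * coeff k f := by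
  rw [add_mul, one_mul, mul_assoc, map_add, coeff_C_mul, coeff_succ_X_mul]

theorem coeff_eq_zero_of_one_add_C_mul_X_mul {a : A} {σ f : A⟦X⟧}
    (h : (1 + C a * X) * σ = f) {N M : ℕ} (hN : coeff N σ = 0)
    (hf : ∀ k, N < k → k ≤ M → coeff k f = 0) :
    ∀ k, N ≤ k → k ≤ M → coeff k σ = 0 := by
  intro k hNk
  induction k, hNk using Nat.le_induction with
  | base => exact fun _ => hN
  | succ k hNk ih =>
    intro hkM
    have := coeff_succ_one_add_C_mul_X_mul a σ k
    rw [h, hf (k + 1) (by omega) hkM, ih (by omega), mul_zero, add_zero] at this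
    exact this.symm
/-- `∑_{i ≤ N} (-1)^i fᵢ T^(N-i)`: if `f = ∏ (1 + rₖ t)` with `N` factors, this is
`∏ (T - rₖ)`. -/
noncomputable def rootPolynomial (f : A⟦X⟧) (N : ℕ) : Polynomial A :=
  ∑ i ∈ Finset.range (N + 1), Polynomial.C ((-1) ^ i * coeff i f) * Polynomial.X ^ (N - i)

theorem rootPolynomial_eq_X_pow_add {f : A⟦X⟧} (hf : constantCoeff f = 1) (N : ℕ) :
    rootPolynomial f N = Polynomial.X ^ N +
      ∑ i ∈ Finset.range N, Polynomial.C ((-1) ^ (i + 1) * coeff (i + 1) f) *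
        Polynomial.X ^ (N - (i + 1)) := by
  rw [rootPolynomial, Finset.sum_range_succ', add_comm]
  simp [hf]

theorem degree_rootPolynomial_sub_X_pow_lt {f : A⟦X⟧} (hf : constantCoeff f = 1) {N : ℕ}
    (hN : 0 < N) : (rootPolynomial f N - Polynomial.X ^ N).degree < (N : WithBot ℕ) := by
  rw [rootPolynomial_eq_X_pow_add hf, add_sub_cancel_left]
  refine (Polynomial.degree_sum_le _ _).trans_lt ((Finset.sup_lt_iff (WithBot.bot_lt_coe N)).2 ?_)
  intro i _
  exact (Polynomial.degree_C_mul_X_pow_le _ _).trans_lt (Nat.cast_lt.2 (Nat.sub_lt hN i.succ_pos))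

theorem monic_rootPolynomial {f : A⟦X⟧} (hf : constantCoeff f = 1) {N : ℕ} (hN : 0 < N) :
    (rootPolynomial f N).Monic := by
  simpa using Polynomial.monic_X_pow_add (degree_rootPolynomial_sub_X_pow_lt hf hN)

theorem natDegree_rootPolynomial [Nontrivial A] {f : A⟦X⟧} (hf : constantCoeff f = 1) {N : ℕ}
    (hN : 0 < N) : (rootPolynomial f N).natDegree = N := by
  have h := degree_rootPolynomial_sub_X_pow_lt hf hN
  rw [← Polynomial.degree_X_pow (R := A)] at h
  refine Polynomial.natDegree_eq_of_degree_eq_some ?_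
  rw [← add_sub_cancel (Polynomial.X ^ N) (rootPolynomial f N),
    Polynomial.degree_add_eq_left_of_degree_lt h, Polynomial.degree_X_pow]

theorem eval₂_rootPolynomial (φ : A →+* B) (x : B) (f : A⟦X⟧) (N : ℕ) :
    (rootPolynomial f N).eval₂ φ x = (-1) ^ N * coeff N (mk (fun j => (-x) ^ j) * map φ f) := by
  rw [coeff_mul, Finset.Nat.sum_antidiagonal_eq_sum_range_succ (fun i j => coeff i _ * coeff j _),
    ← Finset.sum_range_reflect, Finset.mul_sum, rootPolynomial, Polynomial.eval₂_finsetSum]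
  refine Finset.sum_congr rfl fun i hi => ?_
  obtain ⟨k, rfl⟩ := Nat.exists_eq_add_of_le (Finset.mem_range_succ_iff.mp hi)
  have hk : i + k + 1 - 1 - i = k := by omega
  have hsign : ((-1) ^ k * (-1) ^ k : B) = 1 := by rw [← mul_pow]; norm_num
  rw [hk, Nat.add_sub_cancel, Nat.add_sub_cancel_left, Polynomial.eval₂_mul, Polynomial.eval₂_C,
    Polynomial.eval₂_X_pow, coeff_mk, coeff_map, map_mul, map_pow, map_neg, map_one, neg_pow x,
    pow_add]
  linear_combination -(-1) ^ i * φ (coeff i f) * x ^ k * hsign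

theorem eval₂_rootPolynomial_of_map_eq {φ : A →+* B} {x : B} {f : A⟦X⟧} {g : B⟦X⟧}
    (h : map φ f = (1 + C x * X) * g) (N : ℕ) :
    (rootPolynomial f N).eval₂ φ x = (-1) ^ N * coeff N g := by
  rw [eval₂_rootPolynomial, h, ← mul_assoc, mul_comm (mk _), one_add_C_mul_X_mul_mk_neg_pow,
    one_mul]

end PowerSeries

section GenSeries

open PowerSeries

variable {A : Type*} [CommRing A] {m : ℕ}

theorem coeff_zero_genSeries : coeff 0 (genSeries m) = 1 := by
  simp only [genSeries, map_add, map_sum, PowerSeries.coeff_one, PowerSeries.coeff_monomial]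
  simp

theorem coeff_succ_genSeries (i : Fin m) : coeff (i + 1 : ℕ) (genSeries m) = X i := by
  simp [genSeries, PowerSeries.coeff_monomial, Fin.val_inj]

theorem coeff_genSeries_of_lt {k : ℕ} (hk : m < k) : coeff k (genSeries m) = 0 := by
  simp only [genSeries, map_add, map_sum, PowerSeries.coeff_one, PowerSeries.coeff_monomial]
  rw [if_neg (by omega), Finset.sum_eq_zero fun i _ => if_neg (by omega), add_zero]

theorem constantCoeff_genSeries : constantCoeff (genSeries m) = 1 := by
  rw [← PowerSeries.coeff_zero_eq_constantCoeff_apply, coeff_zero_genSeries]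

theorem map_eval₂Hom_genSeries {f : A⟦X⟧} (hf₀ : constantCoeff f = 1)
    (hf : ∀ k, m < k → coeff k f = 0) :
    map (eval₂Hom (Int.castRingHom A) fun i : Fin m => coeff (i + 1 : ℕ) f) (genSeries m) =
      f := by
  ext k
  rw [PowerSeries.coeff_map]
  rcases Nat.lt_or_ge m k with hk | hk
  · rw [coeff_genSeries_of_lt hk, map_zero, hf k hk]
  rcases k with _ | k
  · rw [coeff_zero_genSeries, map_one, PowerSeries.coeff_zero_eq_constantCoeff_apply, hf₀]
  · rw [coeff_succ_genSeries (⟨k, hk⟩ : Fin m), eval₂Hom_X']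

theorem ringHom_ext_genSeries {φ ψ : MvPolynomial (Fin m) ℤ →+* A}
    (h : map φ (genSeries m) = map ψ (genSeries m)) : φ = ψ := by
  refine MvPolynomial.ringHom_ext (fun r => by simp) fun i => ?_
  simpa [coeff_succ_genSeries] using congr(coeff (i + 1 : ℕ) $h)

theorem genSeries_mul_invOfUnit : genSeries m * invOfUnit (genSeries m) 1 = 1 :=
  PowerSeries.mul_invOfUnit _ _ (by rw [constantCoeff_genSeries]; rfl)

theorem map_invOfUnit_genSeries {φ : MvPolynomial (Fin m) ℤ →+* A} {g : A⟦X⟧}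
    (h : map φ (genSeries m) * g = 1) : map φ (invOfUnit (genSeries m) 1) = g := by
  refine left_inv_eq_right_inv ?_ h
  rw [← map_mul, mul_comm, genSeries_mul_invOfUnit, map_one]

theorem constantCoeff_map_genSeries (φ : MvPolynomial (Fin m) ℤ →+* A) :
    constantCoeff (map φ (genSeries m)) = 1 := by
  rw [PowerSeries.constantCoeff_map, constantCoeff_genSeries, map_one]

theorem constantCoeff_map_invOfUnit_genSeries (φ : MvPolynomial (Fin m) ℤ →+* A) :
    constantCoeff (map φ (invOfUnit (genSeries m) 1)) = 1 := by
  rw [PowerSeries.constantCoeff_map, PowerSeries.constantCoeff_invOfUnit]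
  exact map_one φ

theorem constantCoeff_sPoly {k : ℕ} (hk : k ≠ 0) :
    MvPolynomial.constantCoeff (sPoly m k) = 0 := by
  have h : map MvPolynomial.constantCoeff (genSeries m) = 1 := by
    ext (_ | k)
    · simp [coeff_zero_genSeries]
    rcases Nat.lt_or_ge m (k + 1) with hk | hk
    · simp [coeff_genSeries_of_lt hk]
    · simp [coeff_succ_genSeries (⟨k, hk⟩ : Fin m)]
  rw [sPoly, ← PowerSeries.coeff_map, map_invOfUnit_genSeries (g := 1) (by rw [h, one_mul]),
    PowerSeries.coeff_one, if_neg hk]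

end GenSeries

section Quotient

variable {A : Type*} [CommRing A] {m a b : ℕ}

noncomputable def liftRK (φ : MvPolynomial (Fin m) ℤ →+* A)
    (hφ : ∀ k, a ≤ k → k ≤ b → φ (sPoly m k) = 0) : RK m a b →+* A :=
  Ideal.Quotient.lift _ φ fun _ hx => (Ideal.span_le (I := RingHom.ker φ)).2
    (by rintro _ ⟨k, ⟨hak, hkb⟩, rfl⟩; exact hφ k hak hkb) hx

theorem liftRK_comp_qk (φ : MvPolynomial (Fin m) ℤ →+* A)
    (hφ : ∀ k, a ≤ k → k ≤ b → φ (sPoly m k) = 0) : (liftRK φ hφ).comp (qk m a b) = φ :=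
  Ideal.Quotient.lift_comp_mk _ _ _

theorem qk_sPoly {k : ℕ} (hak : a ≤ k) (hkb : k ≤ b) : qk m a b (sPoly m k) = 0 :=
  Ideal.Quotient.eq_zero_iff_mem.2 (Ideal.subset_span ⟨k, ⟨hak, hkb⟩, rfl⟩)

instance RK.nontrivial [NeZero a] : Nontrivial (RK m a b) :=
  (liftRK MvPolynomial.constantCoeff fun _ hak _ =>
    constantCoeff_sPoly (by have := NeZero.ne a; omega)).domain_nontrivial

end Quotient

theorem exists_basis_of_isScalarTower {𝕜 R S : Type*} [CommRing 𝕜] [IsDomain 𝕜]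
    [IsPrincipalIdealRing 𝕜] [CommRing R] [Nontrivial R] [CommRing S] [Algebra 𝕜 R] [Algebra R S]
    [Module 𝕜 S] [IsScalarTower 𝕜 R S] {k N : ℕ} (hk : 0 < k) (c : Module.Basis (Fin k) R S)
    (b : Module.Basis (Fin N) 𝕜 S) : ∃ r, r * k = N ∧ Nonempty (Module.Basis (Fin r) 𝕜 R) := by
  have : Module.Free R S := .of_basis c
  have : Nontrivial S := ⟨⟨c ⟨0, hk⟩, 0, c.ne_zero _⟩⟩
  let ι : R →ₗ[𝕜] S := (Algebra.linearMap R S).restrictScalars 𝕜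
  obtain ⟨r, bι⟩ := Submodule.basisOfPid b (LinearMap.range ι)
  let bR := bι.map (LinearEquiv.ofInjective ι (FaithfulSMul.algebraMap_injective R S)).symm
  exact ⟨r, by simpa using Fintype.card_congr ((bR.smulTower c).indexEquiv b), ⟨bR⟩⟩

section FlagRing

open scoped PowerSeries

variable (m d : ℕ)

noncomputable def projPoly : Polynomial (RK (m + 1) (d + 1) (d + m + 1)) :=
  (PowerSeries.map (qk (m + 1) (d + 1) (d + m + 1)) (genSeries (m + 1))).rootPolynomial (m + 1)

noncomputable def projPoly' : Polynomial (RK m (d + 2) (d + m + 1)) :=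
  (PowerSeries.map (qk m (d + 2) (d + m + 1))
    (PowerSeries.invOfUnit (genSeries m) 1)).rootPolynomial (d + 1)

theorem monic_projPoly : (projPoly m d).Monic :=
  PowerSeries.monic_rootPolynomial (constantCoeff_map_genSeries _) m.succ_pos

theorem monic_projPoly' : (projPoly' m d).Monic :=
  PowerSeries.monic_rootPolynomial (constantCoeff_map_invOfUnit_genSeries _) d.succ_pos

theorem natDegree_projPoly : (projPoly m d).natDegree = m + 1 :=
  PowerSeries.natDegree_rootPolynomial (constantCoeff_map_genSeries _) m.succ_pos

theorem natDegree_projPoly' : (projPoly' m d).natDegree = d + 1 :=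
  PowerSeries.natDegree_rootPolynomial (constantCoeff_map_invOfUnit_genSeries _) d.succ_pos

abbrev FlagRing := AdjoinRoot (projPoly m d)

abbrev FlagRing' := AdjoinRoot (projPoly' m d)

noncomputable def toFlag : MvPolynomial (Fin (m + 1)) ℤ →+* FlagRing m d :=
  (AdjoinRoot.of _).comp (qk _ _ _)

noncomputable def toFlag' : MvPolynomial (Fin m) ℤ →+* FlagRing' m d :=
  (AdjoinRoot.of _).comp (qk _ _ _)

/-- `x(t) / (1 + u t)` in `FlagRing`, where `u` is the adjoined root. -/
noncomputable def cofactorSeries : (FlagRing m d)⟦X⟧ :=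
  PowerSeries.mk (fun j => (-AdjoinRoot.root (projPoly m d)) ^ j) *
    PowerSeries.map (toFlag m d) (genSeries (m + 1))

theorem one_add_root_mul_cofactorSeries :
    (1 + PowerSeries.C (AdjoinRoot.root (projPoly m d)) * PowerSeries.X) * cofactorSeries m d =
      PowerSeries.map (toFlag m d) (genSeries (m + 1)) := by
  rw [cofactorSeries, ← mul_assoc, PowerSeries.one_add_C_mul_X_mul_mk_neg_pow, one_mul]

theorem coeff_cofactorSeries_of_lt {k : ℕ} (hk : m < k) :
    PowerSeries.coeff k (cofactorSeries m d) = 0 := by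
  have htop : PowerSeries.coeff (m + 1) (cofactorSeries m d) = 0 := by
    have h := (PowerSeries.eval₂_rootPolynomial _ _ _ _).symm.trans
      (AdjoinRoot.eval₂_root (projPoly m d))
    rw [PowerSeries.map_map] at h
    exact (neg_one_pow_mul_eq_zero_iff).1 h
  refine PowerSeries.coeff_eq_zero_of_one_add_C_mul_X_mul (one_add_root_mul_cofactorSeries m d)
    htop (fun j hj _ => ?_) k hk le_rfl
  rw [PowerSeries.coeff_map, coeff_genSeries_of_lt hj, map_zero]

theorem constantCoeff_cofactorSeries : PowerSeries.constantCoeff (cofactorSeries m d) = 1 := by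
  simp [cofactorSeries, constantCoeff_map_genSeries]

noncomputable def cofactorHom : MvPolynomial (Fin m) ℤ →+* FlagRing m d :=
  eval₂Hom (Int.castRingHom _) fun i => PowerSeries.coeff (i + 1 : ℕ) (cofactorSeries m d)

theorem map_cofactorHom_genSeries :
    PowerSeries.map (cofactorHom m d) (genSeries m) = cofactorSeries m d :=
  map_eval₂Hom_genSeries (constantCoeff_cofactorSeries m d) fun _ => coeff_cofactorSeries_of_lt m d

theorem map_cofactorHom_invOfUnit :
    PowerSeries.map (cofactorHom m d) (PowerSeries.invOfUnit (genSeries m) 1) =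
      (1 + PowerSeries.C (AdjoinRoot.root (projPoly m d)) * PowerSeries.X) *
        PowerSeries.map (toFlag m d) (PowerSeries.invOfUnit (genSeries (m + 1)) 1) := by
  refine map_invOfUnit_genSeries ?_
  rw [map_cofactorHom_genSeries, ← mul_assoc, mul_comm (cofactorSeries m d),
    one_add_root_mul_cofactorSeries, ← map_mul,
    genSeries_mul_invOfUnit, map_one]

theorem toFlag_sPoly {k : ℕ} (h₁ : d + 1 ≤ k) (h₂ : k ≤ d + m + 1) :
    toFlag m d (sPoly (m + 1) k) = 0 := by
  rw [toFlag, RingHom.comp_apply, qk_sPoly h₁ h₂, map_zero]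

theorem cofactorHom_sPoly {k : ℕ} (h₁ : d + 2 ≤ k) (h₂ : k ≤ d + m + 1) :
    cofactorHom m d (sPoly m k) = 0 := by
  obtain ⟨k, rfl⟩ := Nat.exists_eq_add_of_le' (by omega : 1 ≤ k)
  rw [sPoly, ← PowerSeries.coeff_map, map_cofactorHom_invOfUnit,
    PowerSeries.coeff_succ_one_add_C_mul_X_mul, PowerSeries.coeff_map, PowerSeries.coeff_map]
  rw [← sPoly, ← sPoly, toFlag_sPoly m d (by omega) h₂, toFlag_sPoly m d (by omega) (by omega),
    mul_zero, add_zero]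

noncomputable def flagInv : FlagRing' m d →+* FlagRing m d :=
  AdjoinRoot.lift (liftRK (cofactorHom m d) fun _ => cofactorHom_sPoly m d)
    (AdjoinRoot.root _) (by
      rw [projPoly', PowerSeries.eval₂_rootPolynomial_of_map_eq (g := PowerSeries.map (toFlag m d)
        (PowerSeries.invOfUnit (genSeries (m + 1)) 1)), PowerSeries.coeff_map, ← sPoly,
        toFlag_sPoly m d le_rfl (by omega), mul_zero]
      rw [PowerSeries.map_map, liftRK_comp_qk, map_cofactorHom_invOfUnit])

theorem flagInv_comp_toFlag' : (flagInv m d).comp (toFlag' m d) = cofactorHom m d := by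
  rw [toFlag', ← RingHom.comp_assoc, flagInv, AdjoinRoot.lift_comp_of, liftRK_comp_qk]

theorem flagInv_root : flagInv m d (AdjoinRoot.root _) = AdjoinRoot.root _ :=
  AdjoinRoot.lift_root _

/-- `(1 + v t) y(t)` in `FlagRing'`, where `v` is the adjoined root. -/
noncomputable def productSeries : (FlagRing' m d)⟦X⟧ :=
  (1 + PowerSeries.C (AdjoinRoot.root (projPoly' m d)) * PowerSeries.X) *
    PowerSeries.map (toFlag' m d) (genSeries m)

theorem coeff_productSeries_of_lt {k : ℕ} (hk : m + 1 < k) :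
    PowerSeries.coeff k (productSeries m d) = 0 := by
  obtain ⟨k, rfl⟩ := Nat.exists_eq_add_of_le' (by omega : 1 ≤ k)
  rw [productSeries, PowerSeries.coeff_succ_one_add_C_mul_X_mul, PowerSeries.coeff_map,
    PowerSeries.coeff_map, coeff_genSeries_of_lt (by omega), coeff_genSeries_of_lt (by omega),
    map_zero, mul_zero, add_zero]

theorem constantCoeff_productSeries : PowerSeries.constantCoeff (productSeries m d) = 1 := by
  simp [productSeries, constantCoeff_map_genSeries]

noncomputable def productHom : MvPolynomial (Fin (m + 1)) ℤ →+* FlagRing' m d :=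
  eval₂Hom (Int.castRingHom _) fun i => PowerSeries.coeff (i + 1 : ℕ) (productSeries m d)

theorem map_productHom_genSeries :
    PowerSeries.map (productHom m d) (genSeries (m + 1)) = productSeries m d :=
  map_eval₂Hom_genSeries (constantCoeff_productSeries m d) fun _ => coeff_productSeries_of_lt m d

theorem map_productHom_invOfUnit :
    PowerSeries.map (productHom m d) (PowerSeries.invOfUnit (genSeries (m + 1)) 1) =
      PowerSeries.mk (fun j => (-AdjoinRoot.root (projPoly' m d)) ^ j) *
        PowerSeries.map (toFlag' m d) (PowerSeries.invOfUnit (genSeries m) 1) := by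
  refine map_invOfUnit_genSeries ?_
  rw [map_productHom_genSeries, productSeries, mul_mul_mul_comm,
    PowerSeries.one_add_C_mul_X_mul_mk_neg_pow, ← map_mul,
    genSeries_mul_invOfUnit, map_one, one_mul]

theorem toFlag'_sPoly {k : ℕ} (h₁ : d + 2 ≤ k) (h₂ : k ≤ d + m + 1) :
    toFlag' m d (sPoly m k) = 0 := by
  rw [toFlag', RingHom.comp_apply, qk_sPoly h₁ h₂, map_zero]

theorem productHom_sPoly {k : ℕ} (h₁ : d + 1 ≤ k) (h₂ : k ≤ d + m + 1) :
    productHom m d (sPoly (m + 1) k) = 0 := by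
  have htop : PowerSeries.coeff (d + 1) (PowerSeries.mk (fun j => (-AdjoinRoot.root
      (projPoly' m d)) ^ j) * PowerSeries.map (toFlag' m d)
        (PowerSeries.invOfUnit (genSeries m) 1)) = 0 := by
    have h := (PowerSeries.eval₂_rootPolynomial _ _ _ _).symm.trans
      (AdjoinRoot.eval₂_root (projPoly' m d))
    rw [PowerSeries.map_map] at h
    exact (neg_one_pow_mul_eq_zero_iff).1 h
  rw [sPoly, ← PowerSeries.coeff_map, map_productHom_invOfUnit]
  refine PowerSeries.coeff_eq_zero_of_one_add_C_mul_X_mul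
    (by rw [← mul_assoc, PowerSeries.one_add_C_mul_X_mul_mk_neg_pow, one_mul]) htop
    (fun j hj hj' => ?_) k h₁ h₂
  rw [PowerSeries.coeff_map, ← sPoly, toFlag'_sPoly m d hj hj']

noncomputable def flagHom : FlagRing m d →+* FlagRing' m d :=
  AdjoinRoot.lift (liftRK (productHom m d) fun _ => productHom_sPoly m d)
    (AdjoinRoot.root _) (by
      rw [projPoly, PowerSeries.eval₂_rootPolynomial_of_map_eq (g := PowerSeries.map (toFlag' m d)
        (genSeries m)), PowerSeries.coeff_map, coeff_genSeries_of_lt (by omega), map_zero,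
        mul_zero]
      rw [PowerSeries.map_map, liftRK_comp_qk, map_productHom_genSeries, productSeries])

theorem flagHom_comp_toFlag : (flagHom m d).comp (toFlag m d) = productHom m d := by
  rw [toFlag, ← RingHom.comp_assoc, flagHom, AdjoinRoot.lift_comp_of, liftRK_comp_qk]

theorem flagHom_root : flagHom m d (AdjoinRoot.root _) = AdjoinRoot.root _ :=
  AdjoinRoot.lift_root _

theorem flagInv_comp_flagHom : (flagInv m d).comp (flagHom m d) = RingHom.id _ := by
  refine AdjoinRoot.ringHom_ext (Ideal.Quotient.ringHom_ext (ringHom_ext_genSeries ?_)) ?_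
  · change PowerSeries.map ((flagInv m d).comp ((flagHom m d).comp (toFlag m d))) _ =
      PowerSeries.map (toFlag m d) _
    rw [flagHom_comp_toFlag, ← PowerSeries.map_map, map_productHom_genSeries, productSeries,
      map_mul, map_add, map_one, map_mul, PowerSeries.map_C, PowerSeries.map_X, flagInv_root,
      PowerSeries.map_map, flagInv_comp_toFlag', map_cofactorHom_genSeries,
      one_add_root_mul_cofactorSeries]
  · rw [RingHom.comp_apply, flagHom_root, flagInv_root, RingHom.id_apply]

theorem flagHom_comp_flagInv : (flagHom m d).comp (flagInv m d) = RingHom.id _ := by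
  refine AdjoinRoot.ringHom_ext (Ideal.Quotient.ringHom_ext (ringHom_ext_genSeries ?_)) ?_
  · change PowerSeries.map ((flagHom m d).comp ((flagInv m d).comp (toFlag' m d))) _ =
      PowerSeries.map (toFlag' m d) _
    rw [flagInv_comp_toFlag', ← PowerSeries.map_map, map_cofactorHom_genSeries, cofactorSeries,
      map_mul, PowerSeries.map_mk, PowerSeries.map_map, flagHom_comp_toFlag,
      map_productHom_genSeries, productSeries, ← mul_assoc]
    simp only [Function.comp_def, map_pow, map_neg, flagHom_root]
    rw [mul_comm (PowerSeries.mk _), PowerSeries.one_add_C_mul_X_mul_mk_neg_pow, one_mul]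
  · rw [RingHom.comp_apply, flagInv_root, flagHom_root, RingHom.id_apply]

noncomputable def flagEquiv : FlagRing m d ≃+* FlagRing' m d :=
  RingEquiv.ofRingHom (flagHom m d) (flagInv m d) (flagHom_comp_flagInv m d)
    (flagInv_comp_flagHom m d)

theorem nonempty_basis_RK_succ
    (b : Module.Basis (Fin ((d + m + 1).choose (d + 1))) ℤ (RK m (d + 2) (d + m + 1))) :
    Nonempty (Module.Basis (Fin ((d + m + 1).choose d)) ℤ (RK (m + 1) (d + 1) (d + m + 1))) := by
  let c := (AdjoinRoot.powerBasis' (monic_projPoly m d)).basis.reindex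
    (finCongr (natDegree_projPoly m d))
  let c' := (AdjoinRoot.powerBasis' (monic_projPoly' m d)).basis.reindex
    (finCongr (natDegree_projPoly' m d))
  let b' := (b.smulTower c').reindex finProdFinEquiv |>.map
    (flagEquiv m d).symm.toAddEquiv.toIntLinearEquiv
  obtain ⟨r, hr, ⟨bR⟩⟩ := exists_basis_of_isScalarTower m.succ_pos c b'
  have hr' : r = (d + m + 1).choose d := Nat.eq_of_mul_eq_mul_right m.succ_pos <| by
    rw [hr, Nat.choose_succ_right_eq, show d + m + 1 - d = m + 1 by omega]
  exact ⟨bR.reindex (finCongr hr')⟩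

end FlagRing

theorem nonempty_basis_RK_zero (d : ℕ) :
    Nonempty (Module.Basis (Fin 1) ℤ (RK 0 (d + 1) d)) := by
  have hbot : Ideal.span (sPoly 0 '' Set.Icc (d + 1) d) = ⊥ := by
    rw [Set.Icc_eq_empty (by omega), Set.image_empty, Ideal.span_empty]
  let e : RK 0 (d + 1) d ≃+* ℤ := ((Ideal.quotEquivOfEq hbot).trans
    (RingEquiv.quotientBot _)).trans (MvPolynomial.isEmptyRingEquiv ℤ (Fin 0))
  exact ⟨(Module.Basis.singleton (Fin 1) ℤ).map e.toAddEquiv.toIntLinearEquiv.symm⟩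

theorem nonempty_basis_RK (m d : ℕ) :
    Nonempty (Module.Basis (Fin ((d + m).choose d)) ℤ (RK m (d + 1) (d + m))) := by
  induction m generalizing d with
  | zero => simpa using nonempty_basis_RK_zero d
  | succ m ih =>
    obtain ⟨b⟩ := ih (d + 1)
    rw [Nat.add_right_comm] at b
    exact nonempty_basis_RK_succ m d b

/-- For `0 ≤ d ≤ n`, the ring `R_{n,d} = ℤ[x₁,…,x_{n-d}]/(s_{d+1},…,s_n)` is a
free `ℤ`-module of rank `n choose d`. -/
theorem stmt6 (n d : ℕ) (hd : d ≤ n) :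
    Nonempty (Module.Basis (Fin (n.choose d)) ℤ (RK (n - d) (d + 1) n)) := by
  obtain ⟨m, rfl⟩ := Nat.exists_eq_add_of_le hd
  rw [Nat.add_sub_cancel_left]
  exact nonempty_basis_RK m d
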